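/- arXiv:1612.08902 — 2 statements merged into one kernel-verified Lean document; each statement's English description precedes it below -/
import Mathlib

section
/- Suppose a multivariate polynomial f over a field is homogeneous of degree n and f = P·Q for polynomials P, Q. Then P and Q are each homogeneous (of degrees summing to n). -/
/-!
In a domain, the homogeneous components of lowest degree multiply: if `a` and `b` are the lowest
degrees occurring in `P` and `Q`, the degree `a + b` component of `P * Q` is the (nonzero) product
of their lowest components. Top degrees add as well. A nonzero homogeneous `f = P * Q` has a single
nonzero component, in degree `n`, so both the lowest and the top degrees of `P` and `Q` sum to `n`;
hence each factor has equal lowest and top degree, i.e. is homogeneous.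
-/

open MvPolynomial

namespace MvPolynomial

variable {σ R : Type*} [CommSemiring R]

theorem coe_homogeneousComponent (k : ℕ) (P : MvPolynomial σ R) :
    (homogeneousComponent k P : MvPowerSeries σ R) =
      MvPowerSeries.homogeneousComponent k (P : MvPowerSeries σ R) := by
  ext d
  simp [coeff_homogeneousComponent, MvPowerSeries.coeff_homogeneousComponent]

theorem le_order_coe_of_forall_le_degree {P : MvPolynomial σ R} {a : ℕ}
    (h : ∀ u ∈ P.support, a ≤ u.degree) : (a : ℕ∞) ≤ (P : MvPowerSeries σ R).order :=
  MvPowerSeries.nat_le_order fun d hd => by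
    rw [coeff_coe, ← notMem_support_iff]
    exact fun hdP => hd.not_ge (h d hdP)

theorem homogeneousComponent_add_mul_of_forall_le_degree {P Q : MvPolynomial σ R} {a b : ℕ}
    (hP : ∀ u ∈ P.support, a ≤ u.degree) (hQ : ∀ v ∈ Q.support, b ≤ v.degree) :
    homogeneousComponent (a + b) (P * Q) =
      homogeneousComponent a P * homogeneousComponent b Q := by
  apply coe_injective
  rw [coe_mul, coe_homogeneousComponent, coe_homogeneousComponent, coe_homogeneousComponent,
    coe_mul, MvPowerSeries.homogeneousComponent_mul_of_le_order
      (le_order_coe_of_forall_le_degree hP) (le_order_coe_of_forall_le_degree hQ)]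

theorem homogeneousComponent_degree_ne_zero {P : MvPolynomial σ R} {u : σ →₀ ℕ}
    (hu : u ∈ P.support) : homogeneousComponent u.degree P ≠ 0 := by
  rw [← support_nonempty, support_homogeneousComponent]
  exact ⟨u, Finset.mem_filter.mpr ⟨hu, rfl⟩⟩

theorem exists_homogeneousComponent_ne_zero_forall_le_degree {P : MvPolynomial σ R}
    (hP : P ≠ 0) : ∃ a, homogeneousComponent a P ≠ 0 ∧ ∀ u ∈ P.support, a ≤ u.degree := by
  classical
  obtain ⟨u, hu⟩ := support_nonempty.mpr hP
  have hex : ∃ a, homogeneousComponent a P ≠ 0 := ⟨_, homogeneousComponent_degree_ne_zero hu⟩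
  exact ⟨Nat.find hex, Nat.find_spec hex,
    fun v hv => Nat.find_min' hex (homogeneousComponent_degree_ne_zero hv)⟩

theorem le_totalDegree_of_homogeneousComponent_ne_zero {P : MvPolynomial σ R} {a : ℕ}
    (h : homogeneousComponent a P ≠ 0) : a ≤ P.totalDegree :=
  not_lt.mp fun ha => h (homogeneousComponent_eq_zero a P ha)

theorem isHomogeneous_totalDegree_of_forall_le_degree {P : MvPolynomial σ R}
    (h : ∀ u ∈ P.support, P.totalDegree ≤ u.degree) : P.IsHomogeneous P.totalDegree := by
  intro u hu
  rw [Pi.one_def, ← Finsupp.degree_eq_weight_one]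
  exact le_antisymm (le_totalDegree (mem_support_iff.mpr hu)) (h u (mem_support_iff.mpr hu))

theorem IsHomogeneous.eq_of_homogeneousComponent_ne_zero {f : MvPolynomial σ R} {m n : ℕ}
    (hf : f.IsHomogeneous n) (h : homogeneousComponent m f ≠ 0) : m = n := by
  by_contra hmn
  exact h (by rw [homogeneousComponent_of_mem hf, if_neg hmn])

end MvPolynomial

theorem stmt_9 {σ : Type*} {F : Type*} [Field F]
    (f P Q : MvPolynomial σ F) (n : ℕ)
    (hf : f.IsHomogeneous n) (hf0 : f ≠ 0) (hPQ : f = P * Q) :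
    ∃ p q : ℕ, p + q = n ∧ P.IsHomogeneous p ∧ Q.IsHomogeneous q := by
  have hP : P ≠ 0 := by rintro rfl; exact hf0 (by rw [hPQ, zero_mul])
  have hQ : Q ≠ 0 := by rintro rfl; exact hf0 (by rw [hPQ, mul_zero])
  obtain ⟨a, haP, ha⟩ := exists_homogeneousComponent_ne_zero_forall_le_degree hP
  obtain ⟨b, hbQ, hb⟩ := exists_homogeneousComponent_ne_zero_forall_le_degree hQ
  have hlow : a + b = n := hf.eq_of_homogeneousComponent_ne_zero <| by
    rw [hPQ, homogeneousComponent_add_mul_of_forall_le_degree ha hb]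
    exact mul_ne_zero haP hbQ
  have htop : P.totalDegree + Q.totalDegree = n := by
    rw [← totalDegree_mul_of_isDomain hP hQ, ← hPQ, hf.totalDegree hf0]
  have ha_le := le_totalDegree_of_homogeneousComponent_ne_zero haP
  have hb_le := le_totalDegree_of_homogeneousComponent_ne_zero hbQ
  obtain rfl : a = P.totalDegree := by omega
  obtain rfl : b = Q.totalDegree := by omega
  exact ⟨_, _, htop, isHomogeneous_totalDegree_of_forall_le_degree ha,
    isHomogeneous_totalDegree_of_forall_le_degree hb⟩
end

section
/- Let P(a,b,c) be a polynomial of degree at most 4 in R[a,b,c] such that P vanishes whenever the triangle A=(0,0), B=(b,a), C=(c,0) is isosceles, i.e., P vanishes on the zero sets of a² + b² − 2bc, of a² + b² − c², and of 2b − c (over the complex numbers). Then P is the zero polynomial. -/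
/-!
Each of the three polynomials is prime in `ℂ[a, b, c]`: the two quadrics are Eisenstein in `a`
(at the primes `b` and `b - c` respectively) and `2b - c` is linear. By the Nullstellensatz a
polynomial vanishing on the zero set of a prime is divisible by it, so the complexification of
`P` is divisible by the product of the three, which is homogeneous of degree `5`. A nonzero
multiple of it has degree at least `5`, so `P = 0`.
-/

open MvPolynomial

open Polynomial in
theorem Polynomial.irreducible_X_sq_add_C_mul {R : Type*} [CommRing R] [IsDomain R] {p q : R}
    (hp : Prime p) (hq : ¬ p ∣ q) : Irreducible (X ^ 2 + C (p * q) : R[X]) := by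
  have hmonic : (X ^ 2 + C (p * q) : R[X]).Monic := monic_X_pow_add_C _ two_ne_zero
  have hdeg : (X ^ 2 + C (p * q) : R[X]).natDegree = 2 := natDegree_X_pow_add_C
  refine IsEisensteinAt.irreducible (𝓟 := Ideal.span {p}) ⟨?_, ?_, ?_⟩
    ((Ideal.span_singleton_prime hp.ne_zero).2 hp) hmonic.isPrimitive (by rw [hdeg]; norm_num)
  · rw [hmonic.leadingCoeff, Ideal.mem_span_singleton]
    exact fun h => hp.not_isUnit (isUnit_of_dvd_one h)
  · intro n hn
    rw [hdeg] at hn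
    interval_cases n <;> simp [coeff_X_pow, Ideal.mem_span_singleton]
  · rw [Ideal.span_singleton_pow, Ideal.mem_span_singleton, pow_two]
    simpa [coeff_X_pow, mul_dvd_mul_iff_left hp.ne_zero] using hq

namespace MvPolynomial

theorem not_dvd_of_eval_eq_zero {R σ : Type*} [CommSemiring R] {f g : MvPolynomial σ R}
    (x : σ → R) (hf : eval x f = 0) (hg : eval x g ≠ 0) : ¬ f ∣ g := by
  rintro ⟨h, rfl⟩
  simp [hf] at hg

theorem dvd_of_prime_of_forall_eval_eq_zero {K σ : Type*} [Field K] [IsAlgClosed K] [Finite σ]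
    {f g : MvPolynomial σ K} (hf : Prime f) (h : ∀ x : σ → K, eval x f = 0 → eval x g = 0) :
    f ∣ g := by
  have hg : g ∈ vanishingIdeal K (zeroLocus K (Ideal.span {f})) :=
    fun x hx => h x (hx f (Ideal.subset_span rfl))
  rwa [vanishingIdeal_zeroLocus_eq_radical,
    ((Ideal.span_singleton_prime hf.ne_zero).2 hf).radical, Ideal.mem_span_singleton] at hg

theorem irreducible_of_isHomogeneous_one {K σ : Type*} [Field K] {p : MvPolynomial σ K}
    (hp : p.IsHomogeneous 1) (h0 : p ≠ 0) : Irreducible p :=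
  irreducible_of_totalDegree_eq_one (hp.totalDegree h0) fun _ hx =>
    let ⟨m, hm⟩ := ne_zero_iff.mp h0
    (ne_zero_of_dvd_ne_zero hm (hx m)).isUnit

theorem prime_of_finSuccEquiv_eq_X_sq_add_C_mul {R : Type*} [CommRing R] [IsDomain R]
    [UniqueFactorizationMonoid R] {n : ℕ} {f : MvPolynomial (Fin (n + 1)) R}
    {p q : MvPolynomial (Fin n) R} (hp : Prime p) (hq : ¬ p ∣ q)
    (hf : finSuccEquiv R n f = Polynomial.X ^ 2 + Polynomial.C (p * q)) : Prime f := by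
  rw [← MulEquiv.prime_iff (finSuccEquiv R n).toMulEquiv]
  exact hf ▸ (Polynomial.irreducible_X_sq_add_C_mul hp hq).prime

end MvPolynomial

section Isosceles

local notation "f₁" => (X 0 ^ 2 + X 1 ^ 2 - 2 * X 1 * X 2 : MvPolynomial (Fin 3) ℂ)
local notation "f₂" => (X 0 ^ 2 + X 1 ^ 2 - X 2 ^ 2 : MvPolynomial (Fin 3) ℂ)
local notation "f₃" => (2 * X 1 - X 2 : MvPolynomial (Fin 3) ℂ)

theorem isHomogeneous_f₁ : IsHomogeneous f₁ 2 := by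
  rw [← map_ofNat (C : ℂ →+* MvPolynomial (Fin 3) ℂ) 2]
  exact ((isHomogeneous_X_pow 0 2).add (isHomogeneous_X_pow 1 2)).sub
    (((isHomogeneous_X ℂ 1).C_mul 2).mul (isHomogeneous_X ℂ 2))

theorem isHomogeneous_f₂ : IsHomogeneous f₂ 2 :=
  ((isHomogeneous_X_pow 0 2).add (isHomogeneous_X_pow 1 2)).sub (isHomogeneous_X_pow 2 2)

theorem isHomogeneous_f₃ : IsHomogeneous f₃ 1 := by
  rw [← map_ofNat (C : ℂ →+* MvPolynomial (Fin 3) ℂ) 2]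
  exact ((isHomogeneous_X ℂ 1).C_mul 2).sub (isHomogeneous_X ℂ 2)

theorem prime_f₁ : Prime f₁ := by
  refine prime_of_finSuccEquiv_eq_X_sq_add_C_mul (X_prime (i := 0))
    (not_dvd_of_eval_eq_zero (g := X 0 - 2 * X 1) ![0, 1] (by simp) (by simp)) ?_
  rw [show (1 : Fin 3) = Fin.succ 0 from rfl, show (2 : Fin 3) = Fin.succ 1 from rfl]
  simp only [map_add, map_sub, map_mul, map_pow, map_ofNat, finSuccEquiv_X_zero,
    finSuccEquiv_X_succ]
  ring

theorem prime_f₂ : Prime f₂ := by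
  have hlin : Prime (X 0 - X 1 : MvPolynomial (Fin 2) ℂ) :=
    (irreducible_of_isHomogeneous_one ((isHomogeneous_X ℂ 0).sub (isHomogeneous_X ℂ 1))
      (fun h => by simpa using congrArg (eval ![1, 0]) h)).prime
  refine prime_of_finSuccEquiv_eq_X_sq_add_C_mul hlin
    (not_dvd_of_eval_eq_zero (g := X 0 + X 1) ![1, 1] (by simp) (by norm_num)) ?_
  rw [show (1 : Fin 3) = Fin.succ 0 from rfl, show (2 : Fin 3) = Fin.succ 1 from rfl]
  simp only [map_add, map_sub, map_mul, map_pow, finSuccEquiv_X_zero, finSuccEquiv_X_succ]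
  ring

theorem prime_f₃ : Prime f₃ :=
  (irreducible_of_isHomogeneous_one isHomogeneous_f₃
    (fun h => by simpa using congrArg (eval ![0, 0, 1]) h)).prime

theorem totalDegree_f₁_mul_f₂_mul_f₃ : (f₁ * f₂ * f₃).totalDegree = 5 :=
  ((isHomogeneous_f₁.mul isHomogeneous_f₂).mul isHomogeneous_f₃).totalDegree
    (mul_ne_zero (mul_ne_zero prime_f₁.ne_zero prime_f₂.ne_zero) prime_f₃.ne_zero)

theorem f₁_mul_f₂_mul_f₃_dvd {g : MvPolynomial (Fin 3) ℂ}
    (h₁ : ∀ x : Fin 3 → ℂ, eval x f₁ = 0 → eval x g = 0)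
    (h₂ : ∀ x : Fin 3 → ℂ, eval x f₂ = 0 → eval x g = 0)
    (h₃ : ∀ x : Fin 3 → ℂ, eval x f₃ = 0 → eval x g = 0) : f₁ * f₂ * f₃ ∣ g := by
  have hx : eval ![0, 0, 1] f₁ = 0 := by simp
  have h₁₂ : IsRelPrime f₁ f₂ := prime_f₁.irreducible.isRelPrime_iff_not_dvd.2
    (not_dvd_of_eval_eq_zero _ hx (by simp))
  have h₁₃ : IsRelPrime f₁ f₃ := prime_f₁.irreducible.isRelPrime_iff_not_dvd.2
    (not_dvd_of_eval_eq_zero _ hx (by simp))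
  have h₂₃ : IsRelPrime f₂ f₃ := prime_f₂.irreducible.isRelPrime_iff_not_dvd.2
    (not_dvd_of_eval_eq_zero ![1, 0, 1] (by simp) (by simp))
  exact (h₁₃.mul_left h₂₃).mul_dvd
    (h₁₂.mul_dvd (dvd_of_prime_of_forall_eval_eq_zero prime_f₁ h₁)
      (dvd_of_prime_of_forall_eval_eq_zero prime_f₂ h₂))
    (dvd_of_prime_of_forall_eval_eq_zero prime_f₃ h₃)

end Isosceles

/-- Variables: `a = X 0`, `b = X 1`, `c = X 2`. If a real polynomial of degree at most 4
vanishes (over ℂ) on the zero sets of `a² + b² - 2bc`, `a² + b² - c²` and `2b - c`,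
then it is the zero polynomial. -/
theorem stmt_12 (P : MvPolynomial (Fin 3) ℝ)
    (hdeg : P.totalDegree ≤ 4)
    (h1 : ∀ x : Fin 3 → ℂ, eval x (X 0 ^ 2 + X 1 ^ 2 - 2 * X 1 * X 2 : MvPolynomial (Fin 3) ℂ) = 0 →
      eval x (P.map (algebraMap ℝ ℂ)) = 0)
    (h2 : ∀ x : Fin 3 → ℂ, eval x (X 0 ^ 2 + X 1 ^ 2 - X 2 ^ 2 : MvPolynomial (Fin 3) ℂ) = 0 →
      eval x (P.map (algebraMap ℝ ℂ)) = 0)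
    (h3 : ∀ x : Fin 3 → ℂ, eval x (2 * X 1 - X 2 : MvPolynomial (Fin 3) ℂ) = 0 →
      eval x (P.map (algebraMap ℝ ℂ)) = 0) :
    P = 0 := by
  refine map_injective _ (algebraMap ℝ ℂ).injective ?_
  rw [map_zero]
  by_contra hP
  have hQ : (P.map (algebraMap ℝ ℂ)).totalDegree ≤ 4 :=
    (Finset.sup_mono (support_map_subset _ P)).trans hdeg
  have h5 := totalDegree_le_of_dvd_of_isDomain (f₁_mul_f₂_mul_f₃_dvd h1 h2 h3) hP
  rw [totalDegree_f₁_mul_f₂_mul_f₃] at h5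
  omega
end
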